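/- arXiv:2507.12654 — 9 statements merged into one kernel-verified Lean document; each statement's English description precedes it below -/
import Mathlib

section
/- If (x,y) ∈ ℤ² satisfies x < y (i.e., k((x,y)) < 0), then writing (a_n, a_{n+1}) = Hⁿ((x,y)), the sequence (a_n) is strictly increasing and tends to infinity; in particular the H-orbit of (x,y) is unbounded. -/
def H (p : ℤ × ℤ) : ℤ × ℤ :=
  if 0 ≤ p.2 then (p.2, -p.1 + 2 * p.2) else (p.2, -p.1 + 2 * p.2 + 1)

/-! Each step of `H` shifts the pair one place along the sequence, and the gap `p.2 - p.1`
(that is, `-k p`) never decreases: it is preserved, or grows by one when `p.2 < 0`. So if the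
gap starts positive, consecutive terms increase by at least one, and the sequence tends to
infinity. -/

open Filter Function

lemma StrictMono.apply_zero_add_le {f : ℕ → ℤ} (hf : StrictMono f) (n : ℕ) : f 0 + n ≤ f n := by
  induction n with
  | zero => simp
  | succ n ih =>
    have := hf (Nat.lt_add_one n)
    push_cast
    omega

lemma StrictMono.tendsto_atTop_of_int {f : ℕ → ℤ} (hf : StrictMono f) :
    Tendsto f atTop atTop :=
  tendsto_atTop_mono hf.apply_zero_add_le
    (tendsto_atTop_add_const_left _ _ tendsto_natCast_atTop_atTop)

lemma H_fst (p : ℤ × ℤ) : (H p).1 = p.2 := by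
  unfold H; split_ifs <;> rfl

lemma sub_le_H_sub (p : ℤ × ℤ) : p.2 - p.1 ≤ (H p).2 - (H p).1 := by
  unfold H; split_ifs <;> simp only <;> omega

lemma sub_le_iterate_H_sub (p : ℤ × ℤ) (n : ℕ) :
    p.2 - p.1 ≤ (H^[n] p).2 - (H^[n] p).1 := by
  induction n with
  | zero => rfl
  | succ n ih => exact ih.trans (by rw [iterate_succ_apply']; exact sub_le_H_sub _)

lemma strictMono_iterate_H_fst {p : ℤ × ℤ} (hp : p.1 < p.2) :
    StrictMono fun n : ℕ => (H^[n] p).1 := by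
  refine strictMono_nat_of_lt_succ fun n => ?_
  have := sub_le_iterate_H_sub p n
  rw [iterate_succ_apply', H_fst]
  omega

theorem stmt2 (x y : ℤ) (hxy : x < y) :
    StrictMono (fun n : ℕ => (H^[n] (x, y)).1) ∧
    Filter.Tendsto (fun n : ℕ => (H^[n] (x, y)).1) Filter.atTop Filter.atTop := by
  have hmono : StrictMono fun n : ℕ => (H^[n] (x, y)).1 := strictMono_iterate_H_fst hxy
  exact ⟨hmono, hmono.tendsto_atTop_of_int⟩
end

section
/- For every (x,y) ∈ ℤ² with (x,y) not of the form (m,m) for some nonnegative integer m, the forward orbit {Hⁿ((x,y)) : n ∈ ℕ} is unbounded (infinite). -/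
/-!
The gap `y - x` never decreases along an orbit of `H`, and it grows exactly when the orbit
visits the lower half-plane. On a periodic orbit it is therefore constant, so the orbit
stays in `y ≥ 0`, where the second coordinate grows by the gap at each step; periodicity
forces the gap to vanish, leaving only the fixed points `(m, m)` with `m ≥ 0`. Since `H`
is injective, a finite forward orbit is periodic.
-/

open Function

theorem Function.Injective.mem_periodicPts_of_finite_range {α : Type*} {f : α → α}
    (hf : Injective f) {x : α} (hfin : (Set.range fun n : ℕ => f^[n] x).Finite) :
    x ∈ periodicPts f := by
  obtain ⟨m, n, hmn, heq⟩ := hfin.exists_lt_map_eq_of_forall_mem Set.mem_range_self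
  exact mk_mem_periodicPts (Nat.sub_pos_of_lt hmn) (iterate_cancel hf heq.symm)

theorem Monotone.eq_apply_zero_of_periodic {α : Type*} [PartialOrder α] {f : ℕ → α}
    (hf : Monotone f) {b : ℕ} (hb : 0 < b) (hper : Periodic f b) (n : ℕ) : f n = f 0 :=
  le_antisymm (hper.nat_mul_eq n ▸ hf (Nat.le_mul_of_pos_right n hb)) (hf n.zero_le)

theorem H_injective : Injective H := by
  rintro ⟨a₁, a₂⟩ ⟨b₁, b₂⟩ hab
  simp only [H] at hab
  split_ifs at hab <;> simp only [Prod.mk.injEq] at hab ⊢ <;> omega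

def gap (p : ℤ × ℤ) : ℤ := p.2 - p.1

theorem gap_H (p : ℤ × ℤ) : gap (H p) = gap p + if 0 ≤ p.2 then 0 else 1 := by
  unfold H gap
  split <;> ring

theorem snd_H_of_nonneg {p : ℤ × ℤ} (hp : 0 ≤ p.2) : (H p).2 = p.2 + gap p := by
  rw [H, if_pos hp, gap]
  ring

theorem monotone_gap_iterate_H (p : ℤ × ℤ) : Monotone fun n => gap (H^[n] p) := by
  refine monotone_nat_of_le_succ fun n => ?_
  rw [iterate_succ_apply', gap_H]
  split <;> omega

theorem fst_eq_snd_and_nonneg_of_mem_periodicPts {p : ℤ × ℤ} (hp : p ∈ periodicPts H) :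
    p.1 = p.2 ∧ 0 ≤ p.2 := by
  obtain ⟨b, hb, hpb⟩ := hp
  have hgap : ∀ n, gap (H^[n] p) = gap p :=
    (monotone_gap_iterate_H p).eq_apply_zero_of_periodic hb fun n => by
      simp only [iterate_add_apply, hpb.eq]
  have hnonneg : ∀ n, 0 ≤ (H^[n] p).2 := by
    intro n
    have hstep := gap_H (H^[n] p)
    rw [← iterate_succ_apply' H n, hgap, hgap] at hstep
    split at hstep <;> omega
  have hsnd : ∀ n : ℕ, (H^[n] p).2 = p.2 + n * gap p := by
    intro n
    induction n with
    | zero => simp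
    | succ n ih =>
      rw [iterate_succ_apply', snd_H_of_nonneg (hnonneg n), ih, hgap]
      push_cast
      ring
  have hgap_zero : gap p = 0 := by
    have hb' : (b : ℤ) ≠ 0 := by exact_mod_cast hb.ne'
    have := hsnd b
    rw [hpb.eq] at this
    exact (mul_eq_zero.mp (by omega)).resolve_left hb'
  exact ⟨by unfold gap at hgap_zero; omega, hnonneg 0⟩

theorem stmt4 (x y : ℤ) (h : ¬ ∃ m : ℤ, 0 ≤ m ∧ (x, y) = (m, m)) :
    Set.Infinite (Set.range fun n : ℕ => H^[n] (x, y)) := by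
  intro hfin
  obtain ⟨hxy, hy⟩ :=
    fst_eq_snd_and_nonneg_of_mem_periodicPts (H_injective.mem_periodicPts_of_finite_range hfin)
  exact h ⟨y, hy, Prod.ext hxy rfl⟩
end

section
/- Let A = {(x,y) ∈ ℤ² : x+y > 0 and y > 0}. Then for any (x,y) ∈ A, G²((x,y)) lies in A ∪ {(-m,m) : m > 0}, and moreover the sum of coordinates satisfies (x+y) = (sum of coordinates of G²((x,y))) + 1 whenever the formula G²((x,y)) = (-x-2y+1, 2x+3y-2) applies. Consequently, iterating G² from a point of A eventually reaches a point of the form (-m, m) with m > 0. -/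
def G (p : ℤ × ℤ) : ℤ × ℤ :=
  if p.2 ≤ 0 then (p.2, -p.1 - 2 * p.2) else (p.2, -p.1 - 2 * p.2 + 1)

lemma Gsq (x y : ℤ) (h1 : 0 < x + y) (h2 : 0 < y) :
    G (G (x, y)) = (-x - 2 * y + 1, 2 * x + 3 * y - 2) := by
  have e1 : G (x, y) = (y, -x - 2 * y + 1) := by
    simp only [G]; rw [if_neg (by omega : ¬ ((x, y).2 ≤ 0))]
  rw [e1]
  simp only [G]
  rw [if_pos (by simp; omega : ((y, -x - 2 * y + 1) : ℤ × ℤ).2 ≤ 0)]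
  simp only [Prod.mk.injEq]
  exact ⟨trivial, by ring⟩

lemma key : ∀ k : ℕ, ∀ x y : ℤ, 0 < x + y → 0 < y → x + y ≤ k →
    ∃ n : ℕ, ∃ m : ℤ, 0 < m ∧ (G ∘ G)^[n] (x, y) = (-m, m) := by
  intro k
  induction k with
  | zero => intro x y h1 h2 h3; omega
  | succ k ih =>
    intro x y h1 h2 h3
    by_cases hs : x + y = 1
    · refine ⟨1, y, h2, ?_⟩
      simp only [Function.iterate_one, Function.comp_apply]
      rw [Gsq x y h1 h2]
      simp only [Prod.mk.injEq]; omega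
    · obtain ⟨n, m, hm, hnm⟩ := ih (-x - 2 * y + 1) (2 * x + 3 * y - 2)
        (by omega) (by omega) (by omega)
      exact ⟨n + 1, m, hm, by
        rw [Function.iterate_succ_apply, Function.comp_apply, Gsq x y h1 h2, hnm]⟩

theorem stmt7 (x y : ℤ) (hA : 0 < x + y ∧ 0 < y) :
    ((0 < (G (G (x, y))).1 + (G (G (x, y))).2 ∧ 0 < (G (G (x, y))).2) ∨
      ∃ m : ℤ, 0 < m ∧ G (G (x, y)) = (-m, m)) ∧
    (G (G (x, y)) = (-x - 2 * y + 1, 2 * x + 3 * y - 2) →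
      x + y = ((-x - 2 * y + 1) + (2 * x + 3 * y - 2)) + 1) ∧
    (∃ n : ℕ, ∃ m : ℤ, 0 < m ∧ (G ∘ G)^[n] (x, y) = (-m, m)) := by
  obtain ⟨h1, h2⟩ := hA
  rw [Gsq x y h1 h2]
  refine ⟨?_, by intro _; ring, ?_⟩
  · by_cases hs : x + y = 1
    · exact Or.inr ⟨y, h2, by simp only [Prod.mk.injEq]; omega⟩
    · exact Or.inl ⟨by simp; omega, by simp; omega⟩
  · exact key (x + y).toNat x y h1 h2 (by omega)
end

section
/- Let B = {(x,y) ∈ ℤ² : x+y < 0 and y > 0} and D = {(x,y) ∈ ℤ² : x+y > 0 and y ≤ 0}. Then G(B) ⊆ D ∪ A and G(D) ⊆ B ∪ C, where A = {(x,y) : x+y>0, y>0} and C = {(x,y) : x+y<0, y≤0}. Moreover no orbit can alternate between B and D forever: if for all n the point G^{2n}((x,y)) stayed in B (with the map B→D→B applying the formula G²((x,y)) = (-x-2y+1, 2x+3y-2)), then the first coordinate of G^{2n}((x,y)), which equals n² - (2n-1)x - 2ny, tends to +∞, contradicting nonpositivity of the first coordinates there. -/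
def inA (p : ℤ × ℤ) : Prop := 0 < p.1 + p.2 ∧ 0 < p.2
def inB (p : ℤ × ℤ) : Prop := p.1 + p.2 < 0 ∧ 0 < p.2
def inC (p : ℤ × ℤ) : Prop := p.1 + p.2 < 0 ∧ p.2 ≤ 0
def inD (p : ℤ × ℤ) : Prop := 0 < p.1 + p.2 ∧ p.2 ≤ 0

theorem Function.add_mul_le_iterate {α : Type*} {f : α → α} {u : α → ℤ} {c : ℤ}
    {P : α → Prop} (hstep : ∀ x, P x → u x + c ≤ u (f x)) {x : α}
    (horbit : ∀ k, P (f^[k] x)) (n : ℕ) : u x + n * c ≤ u (f^[n] x) := by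
  induction n with
  | zero => simp
  | succ n ih =>
    rw [Function.iterate_succ_apply']
    have := hstep _ (horbit n)
    push_cast
    linarith

lemma G_fst (p : ℤ × ℤ) : (G p).1 = p.2 := by
  unfold G; split_ifs <;> rfl

lemma G_of_nonpos {p : ℤ × ℤ} (h : p.2 ≤ 0) : G p = (p.2, -p.1 - 2 * p.2) := if_pos h

lemma G_of_pos {p : ℤ × ℤ} (h : 0 < p.2) : G p = (p.2, -p.1 - 2 * p.2 + 1) :=
  if_neg h.not_ge

lemma inD_or_inA_G_of_inB {p : ℤ × ℤ} (hp : inB p) : inD (G p) ∨ inA (G p) := by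
  obtain ⟨hsum, hy⟩ := hp
  rw [G_of_pos hy, inD, inA]
  dsimp only
  omega

lemma inB_or_inC_G_of_inD {p : ℤ × ℤ} (hp : inD p) : inB (G p) ∨ inC (G p) := by
  obtain ⟨hsum, hy⟩ := hp
  rw [G_of_nonpos hy, inB, inC]
  dsimp only
  omega

lemma fst_neg_of_inB {p : ℤ × ℤ} (hp : inB p) : p.1 < 0 := by
  obtain ⟨hsum, hy⟩ := hp
  omega

lemma fst_add_three_le_fst_G_G_of_inB {p : ℤ × ℤ} (hp : inB p) : p.1 + 3 ≤ (G (G p)).1 := by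
  obtain ⟨hsum, hy⟩ := hp
  rw [G_fst, G_of_pos hy]
  dsimp only
  omega

theorem stmt8 :
    (∀ p : ℤ × ℤ, inB p → inD (G p) ∨ inA (G p)) ∧
    (∀ p : ℤ × ℤ, inD p → inB (G p) ∨ inC (G p)) ∧
    (∀ p : ℤ × ℤ, inB p → ¬ ∀ n : ℕ, inB ((G ∘ G)^[n] p)) := by
  refine ⟨fun _ => inD_or_inA_G_of_inB, fun _ => inB_or_inC_G_of_inD, ?_⟩
  intro p hp horbit
  set n := (-p.1).toNat
  have hgrowth : p.1 + n * 3 ≤ ((G ∘ G)^[n] p).1 :=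
    Function.add_mul_le_iterate (u := Prod.fst) (fun _ => fst_add_three_le_fst_G_G_of_inB) horbit n
  have hneg := fst_neg_of_inB (horbit n)
  have hp1 := fst_neg_of_inB hp
  omega
end

section
/- For every (x,y) ∈ ℤ², the G-orbit of (x,y) is periodic: there exists n ≥ 1 with Gⁿ((x,y)) = (x,y). -/
namespace Function

variable {α : Type*} {f ρ : α → α}

theorem isPeriodicPt_two_mul_of_isFixedPt (hρ : Involutive ρ) (hfρ : Involutive (f ∘ ρ))
    {q : α} {d : ℕ} (hq : IsFixedPt ρ q) (hd : IsFixedPt ρ (f^[d] q)) :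
    IsPeriodicPt f (2 * d) q := by
  have hsemi : Semiconj ρ f (ρ ∘ f ∘ ρ) := fun x => by simp only [comp_apply, hρ x]
  have hinv : LeftInverse f (ρ ∘ f ∘ ρ) := fun x => hfρ x
  calc f^[2 * d] q = f^[d] (f^[d] q) := by rw [two_mul, iterate_add_apply]
    _ = f^[d] ((ρ ∘ f ∘ ρ)^[d] q) := by rw [← hd.eq, hsemi.iterate_right d q, hq.eq]
    _ = q := hinv.iterate d q

theorem IsPeriodicPt.of_iterate_apply (hf : Injective f) {n m : ℕ} {x : α}
    (h : IsPeriodicPt f n (f^[m] x)) : IsPeriodicPt f n x :=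
  hf.iterate m <| by rw [(Commute.iterate_iterate_self f m n).eq]; exact h

theorem mem_periodicPts_of_forall_exists_isFixedPt (hρ : Involutive ρ)
    (hfρ : Involutive (f ∘ ρ)) (h : ∀ x, ∃ k, IsFixedPt ρ (f^[k] x)) (x : α) :
    x ∈ periodicPts f := by
  have hf : Injective f := fun a b hab =>
    hρ.injective <| hfρ.injective <| by simp only [comp_apply, hρ a, hρ b, hab]
  obtain ⟨a, ha⟩ := h x
  obtain ⟨j, hj⟩ := h (f (f^[a] x))
  rw [← iterate_succ_apply] at hj
  have hper := (isPeriodicPt_two_mul_of_isFixedPt hρ hfρ ha hj).of_iterate_apply hf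
  exact mk_mem_periodicPts (by omega) hper

end Function

open Function

def reflect (p : ℤ × ℤ) : ℤ × ℤ :=
  (if p.2 ≤ 0 then -p.1 - 2 * p.2 else -p.1 - 2 * p.2 + 1, p.2)

theorem reflect_involutive : Involutive reflect := by
  rintro ⟨x, y⟩
  by_cases hy : y ≤ 0 <;> simp only [reflect, hy, ↓reduceIte, Prod.mk.injEq, and_true] <;> ring

theorem G_reflect (p : ℤ × ℤ) : G (reflect p) = p.swap := by
  obtain ⟨x, y⟩ := p
  by_cases hy : y ≤ 0 <;>
    simp only [G, reflect, hy, ↓reduceIte, Prod.swap_prod_mk, Prod.mk.injEq, true_and] <;> ring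

theorem isFixedPt_reflect {x y : ℤ} (hs : x + y = 0) (hy : y ≤ 0) : IsFixedPt reflect (x, y) := by
  simp only [IsFixedPt, reflect, if_pos hy, Prod.mk.injEq, and_true]
  omega

theorem G_of_nonpos_s10 {x y : ℤ} (hy : y ≤ 0) : G (x, y) = (y, -x - 2 * y) := if_pos hy

theorem G_of_pos_s10 {x y : ℤ} (hy : 0 < y) : G (x, y) = (y, -x - 2 * y + 1) := if_neg hy.not_ge

def ReachesFix (p : ℤ × ℤ) : Prop := ∃ k, IsFixedPt reflect (G^[k] p)

theorem ReachesFix.of_G {p : ℤ × ℤ} (h : ReachesFix (G p)) : ReachesFix p :=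
  let ⟨k, hk⟩ := h
  ⟨k + 1, by rwa [iterate_succ_apply]⟩

theorem reachesFix_of_isFixedPt {p : ℤ × ℤ} (h : IsFixedPt reflect p) : ReachesFix p := ⟨0, h⟩

theorem reachesFix_of_pos_of_pos {x y : ℤ} (hs : 0 < x + y) (hy : 0 < y) : ReachesFix (x, y) := by
  refine ReachesFix.of_G ?_
  rw [G_of_pos_s10 hy]
  rcases eq_or_lt_of_le (show 1 ≤ x + y from hs) with hs1 | hs1
  · exact reachesFix_of_isFixedPt (isFixedPt_reflect (by omega) (by omega))
  · refine ReachesFix.of_G ?_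
    rw [G_of_nonpos_s10 (by omega)]
    exact reachesFix_of_pos_of_pos (by omega) (by omega)
termination_by (x + y).toNat
decreasing_by omega

theorem reachesFix_of_neg_of_nonpos {x y : ℤ} (hs : x + y < 0) (hy : y ≤ 0) :
    ReachesFix (x, y) := by
  refine ReachesFix.of_G ?_
  rw [G_of_nonpos_s10 hy]
  exact reachesFix_of_pos_of_pos (by omega) (by omega)

theorem reachesFix_of_neg_of_pos {x y : ℤ} (hs : x + y < 0) (hy : 0 < y) : ReachesFix (x, y) := by
  refine ReachesFix.of_G ?_
  rw [G_of_pos_s10 hy]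
  rcases lt_or_ge 0 (-x - 2 * y + 1) with hy1 | hy1
  · exact reachesFix_of_pos_of_pos (by omega) hy1
  refine ReachesFix.of_G ?_
  rw [G_of_nonpos_s10 hy1]
  rcases le_or_gt (-y - 2 * (-x - 2 * y + 1)) 0 with hy2 | hy2
  · exact reachesFix_of_neg_of_nonpos (by omega) hy2
  · exact reachesFix_of_neg_of_pos (by omega) hy2
termination_by y.toNat
decreasing_by omega

theorem reachesFix_of_pos_of_nonpos {x y : ℤ} (hs : 0 < x + y) (hy : y ≤ 0) :
    ReachesFix (x, y) := by
  refine ReachesFix.of_G ?_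
  rw [G_of_nonpos_s10 hy]
  rcases le_or_gt (-x - 2 * y) 0 with hy1 | hy1
  · exact reachesFix_of_neg_of_nonpos (by omega) hy1
  · exact reachesFix_of_neg_of_pos (by omega) hy1

theorem reachesFix (p : ℤ × ℤ) : ReachesFix p := by
  obtain ⟨x, y⟩ := p
  rcases lt_trichotomy (x + y) 0 with hs | hs | hs <;> rcases le_or_gt y 0 with hy | hy
  · exact reachesFix_of_neg_of_nonpos hs hy
  · exact reachesFix_of_neg_of_pos hs hy
  · exact reachesFix_of_isFixedPt (isFixedPt_reflect hs hy)
  · refine ReachesFix.of_G ?_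
    rw [G_of_pos_s10 hy]
    exact reachesFix_of_pos_of_nonpos (by omega) (by omega)
  · exact reachesFix_of_pos_of_nonpos hs hy
  · exact reachesFix_of_pos_of_pos hs hy

theorem stmt10 (p : ℤ × ℤ) : ∃ n : ℕ, 1 ≤ n ∧ G^[n] p = p :=
  mem_periodicPts.mp <| mem_periodicPts_of_forall_exists_isFixedPt reflect_involutive
    (fun q => by simp only [comp_apply, G_reflect, Prod.swap_swap]) reachesFix p
end

section
/- For any (a₀, a₁) ∈ ℤ² there exists ε > 0 such that for every real λ with 2-ε < λ < 2, the integer sequence defined by a_{n+2} = ⌈-λ a_{n+1} - a_n⌉ (equivalently, the unique integer sequence with 0 ≤ a_{n+2} + λ a_{n+1} + a_n < 1) is periodic. -/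
/-!
For `λ` just below `2` the recurrence agrees, on any fixed finite stretch, with its limit
`x (n+2) = [x (n+1) > 0] - 2 x (n+1) - x n`, because `⌈-λ b - a⌉ = -2b - a + ⌈(2 - λ) b⌉`.
So it suffices that every orbit of the limit map `T (a, b) = (b, [b > 0] - 2b - a)` on `ℤ²` is
periodic. `T` is reversible: `T ∘ swap ∘ T = swap`. For such a map, two points of a forward
orbit that are fixed by `swap ∘ T` force the orbit to close up, as for a product of two
reflections. The fixed points of `swap ∘ T` are the pairs `(a, -a)` with `a ≥ 0`, and a case
analysis on the signs of `a` and `a + b` shows that every orbit keeps returning to one of them.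
-/

/-- The integer sequence with `0 ≤ a (n+2) + λ * a (n+1) + a n < 1`. -/
noncomputable def seq (l : ℝ) (a0 a1 : ℤ) : ℕ → ℤ
  | 0 => a0
  | 1 => a1
  | n + 2 => ⌈-l * (seq l a0 a1 (n + 1) : ℝ) - (seq l a0 a1 n : ℝ)⌉

open Function

theorem Function.isPeriodicPt_of_reversible {α : Type*} {T R : α → α} (hR : Involutive R)
    (hTR : ∀ y, T (R (T y)) = R y) {p : α} {i j : ℕ} (hij : i < j)
    (hi : T (T^[i] p) = R (T^[i] p)) (hj : T (T^[j] p) = R (T^[j] p)) :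
    IsPeriodicPt T (2 * (j - i)) p := by
  have hT : Injective T := fun x y hxy => hR.injective <| by rw [← hTR x, hxy, hTR]
  have conj : ∀ k y, T^[k] (R (T^[k] y)) = R y := by
    intro k
    induction k with
    | zero => simp
    | succ k ih => intro y; rw [iterate_succ_apply, iterate_succ_apply', hTR, ih]
  have odd_iterate : ∀ k, T (T^[k] p) = R (T^[k] p) → T^[2 * k + 1] p = R p := by
    intro k hk
    rw [show 2 * k + 1 = k + (k + 1) by ring, iterate_add_apply, iterate_succ_apply', hk, conj]
  apply hT.iterate (2 * i + 1)
  rw [← iterate_add_apply, show 2 * i + 1 + 2 * (j - i) = 2 * j + 1 by omega,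
    odd_iterate j hj, odd_iterate i hi]

namespace DiscretizedRotation

/-- The `λ → 2⁻` limit of the recurrence, acting on pairs of consecutive terms. -/
def limMap (p : ℤ × ℤ) : ℤ × ℤ :=
  (p.2, (if 0 < p.2 then 1 else 0) - 2 * p.2 - p.1)

lemma limMap_of_pos {a b : ℤ} (hb : 0 < b) : limMap (a, b) = (b, 1 - 2 * b - a) := by
  simp [limMap, hb]

lemma limMap_of_nonpos {a b : ℤ} (hb : b ≤ 0) : limMap (a, b) = (b, -2 * b - a) := by
  simp [limMap, hb.not_gt]

lemma limMap_swap_limMap (p : ℤ × ℤ) : limMap (limMap p).swap = p.swap := by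
  obtain ⟨a, b⟩ := p
  rcases lt_or_ge 0 b with hb | hb
  · simp only [limMap_of_pos hb, Prod.swap_prod_mk]
    exact Prod.ext rfl (by ring)
  · simp only [limMap_of_nonpos hb, Prod.swap_prod_mk]
    exact Prod.ext rfl (by ring)

def IsTurn (p : ℤ × ℤ) : Prop := limMap p = p.swap

lemma isTurn_iff {a b : ℤ} : IsTurn (a, b) ↔ a + b = 0 ∧ b ≤ 0 := by
  simp only [IsTurn, limMap, Prod.swap_prod_mk, Prod.mk.injEq, true_and]
  split_ifs <;> omega

def ReachesTurn (p : ℤ × ℤ) : Prop := ∃ m, IsTurn (limMap^[m] p)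

lemma ReachesTurn.of_limMap {p : ℤ × ℤ} (h : ReachesTurn (limMap p)) : ReachesTurn p :=
  let ⟨m, hm⟩ := h
  ⟨m + 1, by rwa [iterate_succ_apply]⟩

lemma reachesTurn_of_nonpos_of_sum_pos {a b : ℤ} (ha : a ≤ 0) (hs : 0 < a + b) :
    ReachesTurn (a, b) := by
  apply ReachesTurn.of_limMap
  rw [limMap_of_pos (by omega)]
  rcases (show 1 ≤ a + b from hs).eq_or_lt with hs | hs
  · exact ⟨0, isTurn_iff.2 ⟨by omega, by omega⟩⟩
  · apply ReachesTurn.of_limMap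
    rw [limMap_of_nonpos (by omega)]
    exact reachesTurn_of_nonpos_of_sum_pos (by omega) (by omega)
termination_by (a + b).toNat

lemma reachesTurn_of_pos_of_sum_pos {a b : ℤ} (ha : 0 < a) (hs : 0 < a + b) :
    ReachesTurn (a, b) := by
  apply ReachesTurn.of_limMap
  rcases lt_or_ge 0 b with hb | hb
  · rw [limMap_of_pos hb]
    apply ReachesTurn.of_limMap
    rw [limMap_of_nonpos (by omega)]
    exact reachesTurn_of_nonpos_of_sum_pos (by omega) (by omega)
  rw [limMap_of_nonpos hb]
  apply ReachesTurn.of_limMap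
  rcases lt_or_ge 0 (-2 * b - a) with hc | hc
  · rw [limMap_of_pos hc]
    exact reachesTurn_of_pos_of_sum_pos hc (by omega)
  · rw [limMap_of_nonpos hc]
    exact reachesTurn_of_nonpos_of_sum_pos hc (by omega)
termination_by a.toNat

lemma reachesTurn_of_sum_neg {a b : ℤ} (hs : a + b < 0) :
    ReachesTurn (a, b) := by
  apply ReachesTurn.of_limMap
  rcases lt_or_ge 0 b with hb | hb
  · rw [limMap_of_pos hb]
    exact reachesTurn_of_pos_of_sum_pos hb (by omega)
  · rw [limMap_of_nonpos hb]
    exact reachesTurn_of_nonpos_of_sum_pos hb (by omega)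

lemma reachesTurn_of_sum_eq_zero {a b : ℤ} (hs : a + b = 0) : ReachesTurn (a, b) := by
  rcases le_or_gt b 0 with hb | hb
  · exact ⟨0, isTurn_iff.2 ⟨hs, hb⟩⟩
  · apply ReachesTurn.of_limMap
    rw [limMap_of_pos hb]
    exact reachesTurn_of_pos_of_sum_pos hb (by omega)

lemma reachesTurn (p : ℤ × ℤ) : ReachesTurn p := by
  obtain ⟨a, b⟩ := p
  rcases lt_trichotomy (a + b) 0 with hs | hs | hs
  · exact reachesTurn_of_sum_neg hs
  · exact reachesTurn_of_sum_eq_zero hs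
  · rcases le_or_gt a 0 with ha | ha
    · exact reachesTurn_of_nonpos_of_sum_pos ha hs
    · exact reachesTurn_of_pos_of_sum_pos ha hs

theorem exists_isPeriodicPt_limMap (p : ℤ × ℤ) : ∃ N, 0 < N ∧ IsPeriodicPt limMap N p := by
  obtain ⟨i, hi⟩ := reachesTurn p
  obtain ⟨k, hk⟩ := reachesTurn (limMap^[i + 1] p)
  rw [← iterate_add_apply] at hk
  refine ⟨2 * (k + (i + 1) - i), by omega, ?_⟩
  exact isPeriodicPt_of_reversible Prod.swap_swap limMap_swap_limMap (by omega) hi hk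

lemma ceil_neg_mul_sub_eq {l : ℝ} (hl : l < 2) {a b : ℤ} (hb : (2 - l) * |(b : ℝ)| < 1) :
    ⌈-l * b - a⌉ = (if 0 < b then 1 else 0) - 2 * b - a := by
  have hd : 0 < 2 - l := by linarith
  rw [Int.ceil_eq_iff]
  split_ifs with hpos
  · have hbR : (0 : ℝ) < b := by exact_mod_cast hpos
    rw [abs_of_pos hbR] at hb
    push_cast
    constructor <;> nlinarith
  · have hbR : (b : ℝ) ≤ 0 := by exact_mod_cast not_lt.1 hpos
    rw [abs_of_nonpos hbR] at hb
    push_cast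
    constructor <;> nlinarith

lemma seq_eq_limMap_iterate {l : ℝ} (hl : l < 2) {a0 a1 : ℤ} {N : ℕ}
    (hclose : ∀ k < N, (2 - l) * |((limMap^[k] (a0, a1)).2 : ℝ)| < 1) :
    ∀ n ≤ N, (seq l a0 a1 n, seq l a0 a1 (n + 1)) = limMap^[n] (a0, a1) := by
  intro n hn
  induction n with
  | zero => rfl
  | succ n ih =>
    have hpair := ih (by omega)
    have hnext := hclose n (by omega)
    rw [← hpair] at hnext
    rw [iterate_succ_apply', ← hpair]
    exact Prod.ext rfl (ceil_neg_mul_sub_eq hl hnext)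

end DiscretizedRotation

open DiscretizedRotation in
theorem stmt11 (a0 a1 : ℤ) :
    ∃ ε > (0 : ℝ), ∀ l : ℝ, 2 - ε < l → l < 2 →
      ∃ n : ℕ, 1 ≤ n ∧ seq l a0 a1 n = a0 ∧ seq l a0 a1 (n + 1) = a1 := by
  obtain ⟨N, hN, hper⟩ := exists_isPeriodicPt_limMap (a0, a1)
  set B : ℕ := (Finset.range N).sup fun k => (limMap^[k] (a0, a1)).2.natAbs
  refine ⟨1 / (B + 1), by positivity, fun l hl₁ hl₂ => ⟨N, hN, ?_⟩⟩
  have hε : (2 - l) * (B + 1) < 1 := by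
    rwa [sub_lt_comm, lt_div_iff₀ (by positivity)] at hl₁
  have hclose : ∀ k < N, (2 - l) * |((limMap^[k] (a0, a1)).2 : ℝ)| < 1 := by
    intro k hk
    have hbound : |((limMap^[k] (a0, a1)).2 : ℝ)| ≤ B := by
      rw [← Int.cast_abs, ← Nat.cast_natAbs]
      exact_mod_cast Finset.le_sup (f := fun k => (limMap^[k] (a0, a1)).2.natAbs)
        (Finset.mem_range.2 hk)
    nlinarith
  have hpair := seq_eq_limMap_iterate hl₂ hclose N le_rfl
  rw [hper.eq] at hpair
  exact Prod.ext_iff.1 hpair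
end

section
/- Fix integers 0 ≤ s < d and k with s + kd ≥ T_d where T_n = n(n+1)/2. Let the cycle 𝒞_{s,d,k} be the periodic integer sequence (A B B̄ Ā C C̄)^∞ where A = (s, s+d, ..., s+kd), B = (s+kd+(T_d-T_{d-1}), ..., s+kd+(T_d-T_0)), C = (s-(T_d-T_{d-1}), ..., s-(T_d-T_0)), and the bar denotes reversal. Then for every real λ ∈ [-2 + 1/(s+(k+1)d), -2 + 1/(s+kd)), the sequence 𝒞_{s,d,k} satisfies 0 ≤ a_{n+2} + λ a_{n+1} + a_n < 1 for all n. -/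
/-- Triangular numbers, `T n = n (n+1) / 2`. -/
def T (n : ℕ) : ℤ := (n : ℤ) * ((n : ℤ) + 1) / 2

/-- The word `A B B̄ Ā C C̄` defining the cycle `𝒞_{s,d,k}`. -/
def cycleList (s d k : ℕ) : List ℤ :=
  let A : List ℤ := (List.range (k + 1)).map fun i => (s : ℤ) + i * d
  let B : List ℤ := (List.range d).map fun j => (s : ℤ) + k * d + (T d - T (d - 1 - j))
  let C : List ℤ := (List.range d).map fun j => (s : ℤ) - (T d - T (d - 1 - j))
  A ++ B ++ B.reverse ++ A.reverse ++ C ++ C.reverse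

/-- The periodic sequence `(A B B̄ Ā C C̄)^∞`. -/
def cycleSeq (s d k : ℕ) (n : ℕ) : ℤ :=
  (cycleList s d k).getD (n % (cycleList s d k).length) 0


/- ### triangular number facts -/

lemma T_two (n : ℕ) : 2 * T n = (n:ℤ) * ((n:ℤ)+1) := by
  have h : (2:ℤ) ∣ (n:ℤ) * ((n:ℤ)+1) := (Int.even_mul_succ_self (n:ℤ)).two_dvd
  exact Int.mul_ediv_cancel' h

lemma T_succ (n : ℕ) : T (n+1) = T n + (n:ℤ) + 1 := by
  have h1 := T_two n; have h2 := T_two (n+1)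
  push_cast at h2; nlinarith [h1, h2]

lemma T_zero : T 0 = 0 := rfl
lemma T_one : T 1 = 1 := rfl

lemma T_mono {m n : ℕ} (h : m ≤ n) : T m ≤ T n := by
  have h1 := T_two m; have h2 := T_two n
  have hc : (m:ℤ) ≤ n := by exact_mod_cast h
  nlinarith [mul_nonneg (sub_nonneg.2 hc) (by positivity : (0:ℤ) ≤ (m:ℤ) + (n:ℤ) + 1)]

lemma T_nonneg (n : ℕ) : 0 ≤ T n := T_zero ▸ T_mono (Nat.zero_le n)

lemma T_pred {d : ℕ} (hd : 1 ≤ d) : T d = T (d-1) + d := by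
  have h := T_succ (d-1)
  rw [Nat.sub_add_cancel hd] at h
  have hc : ((d-1:ℕ):ℤ) = (d:ℤ) - 1 := by omega
  rw [hc] at h; linarith

lemma T_pred2 {d : ℕ} (hd : 2 ≤ d) : T d = T (d-2) + 2*(d:ℤ) - 1 := by
  have h1 := T_pred (show 1 ≤ d by omega)
  have h2 := T_pred (show 1 ≤ d - 1 by omega)
  rw [show d - 1 - 1 = d - 2 from by omega] at h2
  have hc : ((d-1:ℕ):ℤ) = (d:ℤ) - 1 := by omega
  rw [hc] at h2; linarith

lemma T_ge_self {d : ℕ} (hd : 1 ≤ d) : (d:ℤ) ≤ T d := by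
  have h := T_pred hd; have := T_nonneg (d-1); linarith

/- ### the position formula -/

def f (s d k p : ℕ) : ℤ :=
  if p ≤ k then (s:ℤ) + p * d
  else if p ≤ k + d then (s:ℤ) + k*d + (T d - T (k+d-p))
  else if p ≤ k + 2*d then (s:ℤ) + k*d + (T d - T (p-(k+d+1)))
  else if p ≤ 2*k+2*d+1 then (s:ℤ) + (2*k+2*d+1-p) * d
  else if p ≤ 2*k+3*d+1 then (s:ℤ) - (T d - T (2*k+3*d+1-p))
  else (s:ℤ) - (T d - T (p-(2*k+3*d+2)))

lemma f_A {s d k p : ℕ} (h : p ≤ k) : f s d k p = (s:ℤ) + p * d := by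
  unfold f; rw [if_pos h]

lemma f_B {s d k p : ℕ} (h1 : k < p) (h2 : p ≤ k + d) :
    f s d k p = (s:ℤ) + k*d + (T d - T (k+d-p)) := by
  unfold f; rw [if_neg (by omega), if_pos h2]

lemma f_Br {s d k p : ℕ} (h1 : k + d < p) (h2 : p ≤ k + 2*d) :
    f s d k p = (s:ℤ) + k*d + (T d - T (p-(k+d+1))) := by
  unfold f; rw [if_neg (by omega), if_neg (by omega), if_pos h2]

lemma f_Ar {s d k p : ℕ} (h1 : k + 2*d < p) (h2 : p ≤ 2*k+2*d+1) :
    f s d k p = (s:ℤ) + (2*k+2*d+1-p) * d := by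
  unfold f; rw [if_neg (by omega), if_neg (by omega), if_neg (by omega), if_pos h2]

lemma f_C {s d k p : ℕ} (h1 : 2*k+2*d+1 < p) (h2 : p ≤ 2*k+3*d+1) :
    f s d k p = (s:ℤ) - (T d - T (2*k+3*d+1-p)) := by
  unfold f
  rw [if_neg (by omega), if_neg (by omega), if_neg (by omega), if_neg (by omega), if_pos h2]

lemma f_Cr {s d k p : ℕ} (h1 : 2*k+3*d+1 < p) :
    f s d k p = (s:ℤ) - (T d - T (p-(2*k+3*d+2))) := by
  unfold f
  rw [if_neg (by omega), if_neg (by omega), if_neg (by omega), if_neg (by omega),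
    if_neg (by omega)]

/- ### getD along the cycle list -/

lemma coeM_eq (l : List ℕ) :
    ((do let a ← l; pure ((a:ℤ))) : List ℤ) = List.map (Nat.cast : ℕ → ℤ) l := by
  induction l with
  | nil => rfl
  | cons x xs ih => simpa using ih

lemma cycleList_eq (s d k : ℕ) :
    cycleList s d k =
      ((List.range (k+1)).map fun i : ℕ => (s : ℤ) + (i:ℤ) * d)
      ++ ((List.range d).map fun j => (s : ℤ) + k * d + (T d - T (d - 1 - j)))
      ++ ((List.range d).map fun j => (s : ℤ) + k * d + (T d - T (d - 1 - j))).reverse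
      ++ ((List.range (k+1)).map fun i : ℕ => (s : ℤ) + (i:ℤ) * d).reverse
      ++ ((List.range d).map fun j => (s : ℤ) - (T d - T (d - 1 - j)))
      ++ ((List.range d).map fun j => (s : ℤ) - (T d - T (d - 1 - j))).reverse := by
  unfold cycleList
  rw [coeM_eq, List.map_map]
  rfl

lemma cycle_len (s d k : ℕ) : (cycleList s d k).length = 2*k+4*d+2 := by
  rw [cycleList_eq]
  simp only [List.length_append, List.length_reverse, List.length_map, List.length_range]
  omega

lemma getD_map_range (n i : ℕ) (g : ℕ → ℤ) (h : i < n) :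
    ((List.range n).map g).getD i 0 = g i := by
  simp [List.getD_eq_getElem?_getD, List.getElem?_map, List.getElem?_range h]

lemma getD_map_range_rev (n i : ℕ) (g : ℕ → ℤ) (h : i < n) :
    ((List.range n).map g).reverse.getD i 0 = g (n-1-i) := by
  rw [List.getD_eq_getElem _ _ (by simpa), List.getElem_reverse]
  simp only [List.getElem_map, List.getElem_range, List.length_map, List.length_range]

lemma getD_eq (s d k p : ℕ) (hp : p < 2*k+4*d+2) :
    (cycleList s d k).getD p 0 = f s d k p := by
  rw [cycleList_eq]
  rcases (by omega :
      p ≤ k ∨ (k < p ∧ p ≤ k+d) ∨ (k+d < p ∧ p ≤ k+2*d) ∨ (k+2*d < p ∧ p ≤ 2*k+2*d+1) ∨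
      (2*k+2*d+1 < p ∧ p ≤ 2*k+3*d+1) ∨ (2*k+3*d+1 < p)) with
    h | ⟨h1, h2⟩ | ⟨h1, h2⟩ | ⟨h1, h2⟩ | ⟨h1, h2⟩ | h1
  · rw [List.getD_append _ _ _ _ (by simp; omega), List.getD_append _ _ _ _ (by simp; omega),
      List.getD_append _ _ _ _ (by simp; omega), List.getD_append _ _ _ _ (by simp; omega),
      List.getD_append _ _ _ _ (by simp; omega), getD_map_range _ _ _ (by omega), f_A h]
  · rw [List.getD_append _ _ _ _ (by simp; omega), List.getD_append _ _ _ _ (by simp; omega),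
      List.getD_append _ _ _ _ (by simp; omega), List.getD_append _ _ _ _ (by simp; omega),
      List.getD_append_right _ _ _ _ (by simp; omega)]
    simp only [List.length_map, List.length_range]
    rw [getD_map_range _ _ _ (by omega), f_B h1 h2,
      show d - 1 - (p - (k+1)) = k + d - p from by omega]
  · rw [List.getD_append _ _ _ _ (by simp; omega), List.getD_append _ _ _ _ (by simp; omega),
      List.getD_append _ _ _ _ (by simp; omega),
      List.getD_append_right _ _ _ _ (by simp; omega)]
    simp only [List.length_append, List.length_map, List.length_range]
    rw [getD_map_range_rev _ _ _ (by omega), f_Br h1 h2,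
      show d - 1 - (d - 1 - (p - (k+1+d))) = p - (k+d+1) from by omega]
  · rw [List.getD_append _ _ _ _ (by simp; omega), List.getD_append _ _ _ _ (by simp; omega),
      List.getD_append_right _ _ _ _ (by simp; omega)]
    simp only [List.length_append, List.length_map, List.length_range, List.length_reverse]
    rw [getD_map_range_rev _ _ _ (by omega), f_Ar h1 h2]
    congr 2
    omega
  · rw [List.getD_append _ _ _ _ (by simp; omega),
      List.getD_append_right _ _ _ _ (by simp; omega)]
    simp only [List.length_append, List.length_map, List.length_range, List.length_reverse]
    rw [getD_map_range _ _ _ (by omega), f_C h1 h2,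
      show d - 1 - (p - (k+1+d+d+(k+1))) = 2*k+3*d+1-p from by omega]
  · rw [List.getD_append_right _ _ _ _ (by simp; omega)]
    simp only [List.length_append, List.length_map, List.length_range, List.length_reverse]
    rw [getD_map_range_rev _ _ _ (by omega), f_Cr h1,
      show d - 1 - (d - 1 - (p - (k+1+d+d+(k+1)+d))) = p - (2*k+3*d+2) from by omega]

lemma cycleSeq_eq (s d k n : ℕ) : cycleSeq s d k n = f s d k (n % (2*k+4*d+2)) := by
  unfold cycleSeq
  rw [cycle_len, getD_eq]
  exact Nat.mod_lt _ (by omega)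

lemma T_succ2 (n : ℕ) : T (n+2) = T n + 2*(n:ℤ) + 3 := by
  have h1 := T_succ n
  have h2 := T_succ (n+1)
  push_cast at h2 ⊢
  linarith

set_option maxHeartbeats 3200000 in
lemma key_s12 (s d k : ℕ) (hsd : s < d) (hk : T d ≤ (s:ℤ) + k * d) (n : ℕ) :
    (cycleSeq s d k (n+2) - 2 * cycleSeq s d k (n+1) + cycleSeq s d k n = 0 ∧
      0 ≤ cycleSeq s d k (n+1) ∧ cycleSeq s d k (n+1) ≤ (s:ℤ) + k*d) ∨
    (cycleSeq s d k (n+2) - 2 * cycleSeq s d k (n+1) + cycleSeq s d k n = -1 ∧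
      (s:ℤ) + k*d + d ≤ cycleSeq s d k (n+1) ∧ cycleSeq s d k (n+1) ≤ 2*((s:ℤ) + k*d)) ∨
    (cycleSeq s d k (n+2) - 2 * cycleSeq s d k (n+1) + cycleSeq s d k n = 1 ∧
      -((s:ℤ) + k*d) ≤ cycleSeq s d k (n+1) ∧ cycleSeq s d k (n+1) ≤ -1) := by
  have hd : 1 ≤ d := by omega
  have hd' : (1:ℤ) ≤ (d:ℤ) := by exact_mod_cast hd
  have hs' : (0:ℤ) ≤ (s:ℤ) := by positivity
  have hsd' : (s:ℤ) < (d:ℤ) := by exact_mod_cast hsd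
  have hTd : (d:ℤ) ≤ T d := T_ge_self hd
  have hk1 : 1 ≤ k := by
    by_contra h
    have hk0 : k = 0 := by omega
    subst hk0
    push_cast at hk
    linarith
  have hk' : (1:ℤ) ≤ (k:ℤ) := by exact_mod_cast hk1
  have hkd : (d:ℤ) ≤ (k:ℤ)*(d:ℤ) := by nlinarith
  have hM0 : (1:ℤ) ≤ (s:ℤ) + k*d := by linarith
  have e0 := cycleSeq_eq s d k n
  have e1 := cycleSeq_eq s d k (n+1)
  have e2 := cycleSeq_eq s d k (n+2)
  obtain ⟨p, hp⟩ : ∃ p, n % (2*k+4*d+2) = p := ⟨_, rfl⟩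
  have hpL : p < 2*k+4*d+2 := hp ▸ Nat.mod_lt _ (by omega)
  have h1 : (n+1) % (2*k+4*d+2) = (p+1) % (2*k+4*d+2) := by
    rw [← hp, Nat.mod_add_mod]
  have h2 : (n+2) % (2*k+4*d+2) = (p+2) % (2*k+4*d+2) := by
    rw [← hp, Nat.mod_add_mod]
  rw [hp] at e0
  rw [h1] at e1
  rw [h2] at e2
  rw [e0, e1, e2]
  clear e0 e1 e2 h1 h2 hp
  rcases (by omega : p+2 < 2*k+4*d+2 ∨ p = 2*k+4*d ∨ p = 2*k+4*d+1) with hw | hw | hw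
  · -- no wrap-around
    rw [Nat.mod_eq_of_lt (by omega : p+1 < 2*k+4*d+2), Nat.mod_eq_of_lt hw]
    rcases (by omega :
        p+2 ≤ k ∨ (p+1 = k) ∨ (p = k ∧ 2 ≤ d) ∨ (p = k ∧ d = 1) ∨
        (k+1 ≤ p ∧ p+2 ≤ k+d) ∨ (p+1 = k+d ∧ k+1 ≤ p) ∨ (p = k+d ∧ 2 ≤ d) ∨
        (p = k+d ∧ d = 1) ∨ (k+d+1 ≤ p ∧ p+2 ≤ k+2*d) ∨ (p+1 = k+2*d ∧ k+d+1 ≤ p) ∨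
        p = k+2*d ∨ (k+2*d+1 ≤ p ∧ p+2 ≤ 2*k+2*d+1) ∨ (p+1 = 2*k+2*d+1) ∨
        (p = 2*k+2*d+1 ∧ 2 ≤ d) ∨ (p = 2*k+2*d+1 ∧ d = 1) ∨
        (2*k+2*d+2 ≤ p ∧ p+2 ≤ 2*k+3*d+1) ∨ (p+1 = 2*k+3*d+1 ∧ 2*k+2*d+2 ≤ p) ∨
        (p = 2*k+3*d+1 ∧ p+2 < 2*k+4*d+2) ∨ (2*k+3*d+2 ≤ p ∧ p+2 ≤ 2*k+4*d+1)) with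
      hc | hc | ⟨hc, hd2⟩ | ⟨hc, hd1⟩ | ⟨hc1, hc2⟩ | ⟨hc, hc2⟩ | ⟨hc, hd2⟩ | ⟨hc, hd1⟩ |
      ⟨hc1, hc2⟩ | ⟨hc, hc2⟩ | hc | ⟨hc1, hc2⟩ | hc | ⟨hc, hd2⟩ | ⟨hc, hd1⟩ |
      ⟨hc1, hc2⟩ | ⟨hc, hc2⟩ | ⟨hc, hc2⟩ | ⟨hc1, hc2⟩
    · -- 1: inside A
      rw [f_A (show p+2 ≤ k by omega), f_A (show p+1 ≤ k by omega), f_A (show p ≤ k by omega)]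
      have hb : ((p:ℤ)+1) * d ≤ k*d := by
        have : ((p:ℤ)+1) ≤ k := by exact_mod_cast (show p+1 ≤ k by omega)
        nlinarith
      refine Or.inl ⟨by push_cast; ring, by positivity, by push_cast; linarith⟩
    · -- 2: (A_{k-1}, A_k, B_0)
      subst hc
      rw [f_B (show p+1 < p+2 by omega) (show p+2 ≤ p+1+d by omega),
        f_A (le_refl (p+1)), f_A (show p ≤ p+1 by omega),
        show p+1+d-(p+2) = d-1 by omega]
      refine Or.inl ⟨?_, by positivity, le_refl _⟩
      have := T_pred hd
      push_cast
      linarith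
    · -- 3: (A_k, B_0, B_1), d ≥ 2
      subst hc
      rw [f_B (show p < p+1 by omega) (show p+1 ≤ p+d by omega),
        f_B (show p < p+2 by omega) (show p+2 ≤ p+d by omega),
        f_A (le_refl p),
        show p+d-(p+1) = d-1 by omega, show p+d-(p+2) = d-2 by omega]
      have h1 := T_pred hd
      have h2 := T_pred2 hd2
      refine Or.inr (Or.inl ⟨by push_cast; linarith, by push_cast; linarith, by linarith⟩)
    · -- 4: (A_k, B_0, B̄_0), d = 1
      subst hd1; subst hc
      rw [f_B (show p < p+1 by omega) (show p+1 ≤ p+1 by omega),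
        f_Br (show p+1 < p+2 by omega) (show p+2 ≤ p+2*1 by omega),
        f_A (le_refl p),
        show p+1-(p+1) = 0 by omega, show p+2-(p+1+1) = 0 by omega]
      rw [T_zero, T_one]
      refine Or.inr (Or.inl ⟨by push_cast; ring, by push_cast; linarith, by push_cast; linarith⟩)
    · -- 5: inside B
      obtain ⟨a, ha1, ha2⟩ : ∃ a, k+d-p = a+2 ∧ a+2 ≤ d-1 := ⟨k+d-p-2, by omega, by omega⟩
      rw [f_B (show k < p by omega) (show p ≤ k+d by omega),
        f_B (show k < p+1 by omega) (show p+1 ≤ k+d by omega),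
        f_B (show k < p+2 by omega) (show p+2 ≤ k+d by omega),
        ha1, show k+d-(p+1) = a+1 by omega, show k+d-(p+2) = a by omega]
      have h1 := T_succ a
      have h2 := T_succ2 a
      have h3 := T_pred hd
      have h4 : T (a+1) ≤ T (d-1) := T_mono (by omega)
      refine Or.inr (Or.inl ⟨by linarith, by linarith, ?_⟩)
      have := T_nonneg (a+1)
      linarith
    · -- 6: (B_{d-2}, B_{d-1}, B̄_0), p+1 = k+d
      rw [f_B (show k < p by omega) (show p ≤ k+d by omega),
        f_B (show k < p+1 by omega) (show p+1 ≤ k+d by omega),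
        f_Br (show k+d < p+2 by omega) (show p+2 ≤ k+2*d by omega),
        show k+d-p = 1 by omega, show k+d-(p+1) = 0 by omega,
        show p+2-(k+d+1) = 0 by omega]
      rw [T_zero, T_one]
      refine Or.inr (Or.inl ⟨by ring, by linarith, by linarith⟩)
    · -- 7: (B_{d-1}, B̄_0, B̄_1), p = k+d, d ≥ 2
      rw [f_B (show k < p by omega) (show p ≤ k+d by omega),
        f_Br (show k+d < p+1 by omega) (show p+1 ≤ k+2*d by omega),
        f_Br (show k+d < p+2 by omega) (show p+2 ≤ k+2*d by omega),
        show k+d-p = 0 by omega, show p+1-(k+d+1) = 0 by omega,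
        show p+2-(k+d+1) = 1 by omega]
      rw [T_zero, T_one]
      refine Or.inr (Or.inl ⟨by ring, by linarith, by linarith⟩)
    · -- 8: p = k+d, d = 1
      subst hd1
      rw [f_B (show k < p by omega) (show p ≤ k+1 by omega),
        f_Br (show k+1 < p+1 by omega) (show p+1 ≤ k+2*1 by omega),
        f_Ar (show k+2*1 < p+2 by omega) (show p+2 ≤ 2*k+2*1+1 by omega),
        show k+1-p = 0 by omega, show p+1-(k+1+1) = 0 by omega]
      rw [T_zero, T_one]
      have hpz : (p:ℤ) = k+1 := by omega
      refine Or.inr (Or.inl ⟨by push_cast; rw [hpz]; ring,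
        by push_cast; linarith, by push_cast; linarith [hM0]⟩)
    · -- 9: inside B̄
      obtain ⟨a, ha1, ha2⟩ : ∃ a, p-(k+d+1) = a ∧ a+2 ≤ d-1 := ⟨p-(k+d+1), rfl, by omega⟩
      rw [f_Br (show k+d < p by omega) (show p ≤ k+2*d by omega),
        f_Br (show k+d < p+1 by omega) (show p+1 ≤ k+2*d by omega),
        f_Br (show k+d < p+2 by omega) (show p+2 ≤ k+2*d by omega),
        ha1, show p+1-(k+d+1) = a+1 by omega, show p+2-(k+d+1) = a+2 by omega]
      have h1 := T_succ a
      have h2 := T_succ2 a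
      have h3 := T_pred hd
      have h4 : T (a+1) ≤ T (d-1) := T_mono (by omega)
      refine Or.inr (Or.inl ⟨by linarith, by linarith, ?_⟩)
      have := T_nonneg (a+1)
      linarith
    · -- 10: (B̄_{d-2}, B̄_{d-1}, Ā_0), p+1 = k+2d
      have hd2 : 2 ≤ d := by omega
      rw [f_Br (show k+d < p by omega) (show p ≤ k+2*d by omega),
        f_Br (show k+d < p+1 by omega) (show p+1 ≤ k+2*d by omega),
        f_Ar (show k+2*d < p+2 by omega) (show p+2 ≤ 2*k+2*d+1 by omega),
        show p-(k+d+1) = d-2 by omega, show p+1-(k+d+1) = d-1 by omega]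
      have h1 := T_pred hd
      have h2 := T_pred2 hd2
      have hpz : (p:ℤ) = k+2*d-1 := by omega
      refine Or.inr (Or.inl ⟨by push_cast; rw [hpz]; nlinarith [h1, h2],
        by linarith, by linarith⟩)
    · -- 11: (B̄_{d-1}, Ā_0, Ā_1), p = k+2d
      rw [f_Br (show k+d < p by omega) (show p ≤ k+2*d by omega),
        f_Ar (show k+2*d < p+1 by omega) (show p+1 ≤ 2*k+2*d+1 by omega),
        f_Ar (show k+2*d < p+2 by omega) (show p+2 ≤ 2*k+2*d+1 by omega),
        show p-(k+d+1) = d-1 by omega]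
      have h1 := T_pred hd
      have hpz : (p:ℤ) = k+2*d := by omega
      refine Or.inl ⟨by push_cast; rw [hpz]; nlinarith [h1],
        by push_cast; rw [hpz]; nlinarith [hM0], by push_cast; rw [hpz]; nlinarith⟩
    · -- 12: inside Ā
      rw [f_Ar (show k+2*d < p by omega) (show p ≤ 2*k+2*d+1 by omega),
        f_Ar (show k+2*d < p+1 by omega) (show p+1 ≤ 2*k+2*d+1 by omega),
        f_Ar (show k+2*d < p+2 by omega) (show p+2 ≤ 2*k+2*d+1 by omega)]
      have hb1 : (0:ℤ) ≤ 2*(k:ℤ)+2*d+1-((p:ℤ)+1) := by omega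
      have hb2 : 2*(k:ℤ)+2*d+1-((p:ℤ)+1) ≤ (k:ℤ) := by omega
      have hq1 := mul_nonneg hb1 (show (0:ℤ) ≤ d by positivity)
      have hq2 := mul_le_mul_of_nonneg_right hb2 (show (0:ℤ) ≤ d by positivity)
      refine Or.inl ⟨by push_cast; ring, by push_cast; linarith [hq1],
        by push_cast; linarith [hq2]⟩
    · -- 13: (Ā_{k-1}, Ā_k, C_0), p+1 = 2k+2d+1
      rw [f_Ar (show k+2*d < p by omega) (show p ≤ 2*k+2*d+1 by omega),
        f_Ar (show k+2*d < p+1 by omega) (show p+1 ≤ 2*k+2*d+1 by omega),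
        f_C (show 2*k+2*d+1 < p+2 by omega) (show p+2 ≤ 2*k+3*d+1 by omega),
        show 2*k+3*d+1-(p+2) = d-1 by omega]
      have h1 := T_pred hd
      have hpz : (p:ℤ) = 2*k+2*d := by omega
      refine Or.inl ⟨by push_cast; rw [hpz]; nlinarith [h1],
        by push_cast; rw [hpz]; nlinarith [hs'],
        by push_cast; rw [hpz]; nlinarith [hkd, hd']⟩
    · -- 14: (Ā_k, C_0, C_1), d ≥ 2
      rw [f_Ar (show k+2*d < p by omega) (show p ≤ 2*k+2*d+1 by omega),
        f_C (show 2*k+2*d+1 < p+1 by omega) (show p+1 ≤ 2*k+3*d+1 by omega),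
        f_C (show 2*k+2*d+1 < p+2 by omega) (show p+2 ≤ 2*k+3*d+1 by omega),
        show 2*k+3*d+1-(p+1) = d-1 by omega,
        show 2*k+3*d+1-(p+2) = d-2 by omega]
      have h1 := T_pred hd
      have h2 := T_pred2 hd2
      have hpz : (p:ℤ) = 2*k+2*d+1 := by omega
      refine Or.inr (Or.inr ⟨by push_cast; rw [hpz]; nlinarith [h1, h2],
        by linarith, by linarith⟩)
    · -- 15: p = 2k+2d+1, d = 1
      subst hd1
      have hs0 : s = 0 := by omega
      subst hs0
      rw [f_Ar (show k+2*1 < p by omega) (show p ≤ 2*k+2*1+1 by omega),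
        f_C (p := p+1) (show 2*k+2*1+1 < p+1 by omega) (show p+1 ≤ 2*k+3*1+1 by omega),
        f_Cr (show 2*k+3*1+1 < p+2 by omega),
        show 2*k+3*1+1-(p+1) = 0 by omega,
        show p+2-(2*k+3*1+2) = 0 by omega]
      rw [T_zero, T_one]
      have hpz : (p:ℤ) = 2*k+3 := by omega
      refine Or.inr (Or.inr ⟨by push_cast; rw [hpz]; ring,
        by push_cast; linarith [hk'], by norm_num⟩)
    · -- 16: inside C
      obtain ⟨a, ha1, ha2⟩ : ∃ a, 2*k+3*d+1-p = a+2 ∧ a+2 ≤ d-1 := ⟨2*k+3*d+1-p-2, by omega, by omega⟩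
      rw [f_C (show 2*k+2*d+1 < p by omega) (show p ≤ 2*k+3*d+1 by omega),
        f_C (show 2*k+2*d+1 < p+1 by omega) (show p+1 ≤ 2*k+3*d+1 by omega),
        f_C (show 2*k+2*d+1 < p+2 by omega) (show p+2 ≤ 2*k+3*d+1 by omega),
        ha1, show 2*k+3*d+1-(p+1) = a+1 by omega, show 2*k+3*d+1-(p+2) = a by omega]
      have h1 := T_succ a
      have h2 := T_succ2 a
      have h3 := T_pred hd
      have h4 : T (a+1) ≤ T (d-1) := T_mono (by omega)
      have h5 := T_nonneg (a+1)
      refine Or.inr (Or.inr ⟨by linarith, by linarith, by linarith⟩)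
    · -- 17: (C_{d-2}, C_{d-1}, C̄_0), p+1 = 2k+3d+1
      rw [f_C (show 2*k+2*d+1 < p by omega) (show p ≤ 2*k+3*d+1 by omega),
        f_C (show 2*k+2*d+1 < p+1 by omega) (show p+1 ≤ 2*k+3*d+1 by omega),
        f_Cr (show 2*k+3*d+1 < p+2 by omega),
        show 2*k+3*d+1-p = 1 by omega, show 2*k+3*d+1-(p+1) = 0 by omega,
        show p+2-(2*k+3*d+2) = 0 by omega]
      rw [T_zero, T_one]
      refine Or.inr (Or.inr ⟨by ring, by linarith, by linarith⟩)
    · -- 18: (C_{d-1}, C̄_0, C̄_1), p = 2k+3d+1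
      rw [f_C (show 2*k+2*d+1 < p by omega) (show p ≤ 2*k+3*d+1 by omega),
        f_Cr (show 2*k+3*d+1 < p+1 by omega),
        f_Cr (show 2*k+3*d+1 < p+2 by omega),
        show 2*k+3*d+1-p = 0 by omega, show p+1-(2*k+3*d+2) = 0 by omega,
        show p+2-(2*k+3*d+2) = 1 by omega]
      rw [T_zero, T_one]
      refine Or.inr (Or.inr ⟨by ring, by linarith, by linarith⟩)
    · -- 19: inside C̄
      obtain ⟨a, ha1, ha2⟩ : ∃ a, p-(2*k+3*d+2) = a ∧ a+2 ≤ d-1 := ⟨p-(2*k+3*d+2), rfl, by omega⟩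
      rw [f_Cr (show 2*k+3*d+1 < p by omega),
        f_Cr (show 2*k+3*d+1 < p+1 by omega),
        f_Cr (show 2*k+3*d+1 < p+2 by omega),
        ha1, show p+1-(2*k+3*d+2) = a+1 by omega, show p+2-(2*k+3*d+2) = a+2 by omega]
      have h1 := T_succ a
      have h2 := T_succ2 a
      have h3 := T_pred hd
      have h4 : T (a+1) ≤ T (d-1) := T_mono (by omega)
      have h5 := T_nonneg (a+1)
      refine Or.inr (Or.inr ⟨by linarith, by linarith, by linarith⟩)
  · -- wrap: p = 2k+4d, so p+2 = L
    rw [Nat.mod_eq_of_lt (by omega : p+1 < 2*k+4*d+2),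
      show (p+2) % (2*k+4*d+2) = 0 from by
        rw [show p+2 = 2*k+4*d+2 by omega, Nat.mod_self]]
    subst hw
    rcases (by omega : 2 ≤ d ∨ d = 1) with hd2 | hd1
    · rw [f_Cr (show 2*k+3*d+1 < 2*k+4*d by omega),
        f_Cr (show 2*k+3*d+1 < 2*k+4*d+1 by omega),
        f_A (show 0 ≤ k by omega),
        show 2*k+4*d-(2*k+3*d+2) = d-2 by omega,
        show 2*k+4*d+1-(2*k+3*d+2) = d-1 by omega]
      have h1 := T_pred hd
      have h2 := T_pred2 hd2
      refine Or.inr (Or.inr ⟨by push_cast; linarith, by linarith, by linarith⟩)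
    · subst hd1
      have hs0 : s = 0 := by omega
      subst hs0
      rw [f_C (p := 2*k+4*1) (show 2*k+2*1+1 < 2*k+4*1 by omega)
          (show 2*k+4*1 ≤ 2*k+3*1+1 by omega),
        f_Cr (p := 2*k+4*1+1) (show 2*k+3*1+1 < 2*k+4*1+1 by omega),
        f_A (p := 0) (show 0 ≤ k by omega),
        show 2*k+3*1+1-(2*k+4*1) = 0 by omega,
        show 2*k+4*1+1-(2*k+3*1+2) = 0 by omega]
      rw [T_zero, T_one]
      refine Or.inr (Or.inr ⟨by push_cast; try ring, by push_cast; linarith [hk'], by push_cast⟩)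
  · -- wrap: p = 2k+4d+1 = L-1
    rw [show (p+1) % (2*k+4*d+2) = 0 from by
        rw [show p+1 = 2*k+4*d+2 by omega, Nat.mod_self],
      show (p+2) % (2*k+4*d+2) = 1 from by
        rw [show p+2 = (2*k+4*d+2)+1 by omega, Nat.add_mod_left]
        exact Nat.mod_eq_of_lt (by omega)]
    subst hw
    rw [f_Cr (show 2*k+3*d+1 < 2*k+4*d+1 by omega),
      f_A (show 0 ≤ k by omega), f_A (show 1 ≤ k by omega),
      show 2*k+4*d+1-(2*k+3*d+2) = d-1 by omega]
    have h1 := T_pred hd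
    refine Or.inl ⟨by push_cast; linarith, by positivity, by push_cast; linarith [hkd, hd']⟩

set_option maxHeartbeats 1600000 in
theorem stmt12 (s d k : ℕ) (hsd : s < d) (hk : T d ≤ (s : ℤ) + k * d)
    (l : ℝ) (hl1 : -2 + 1 / ((s : ℝ) + (k + 1) * d) ≤ l)
    (hl2 : l < -2 + 1 / ((s : ℝ) + k * d)) (n : ℕ) :
    0 ≤ (cycleSeq s d k (n + 2) : ℝ) + l * (cycleSeq s d k (n + 1) : ℝ)
        + (cycleSeq s d k n : ℝ) ∧
    (cycleSeq s d k (n + 2) : ℝ) + l * (cycleSeq s d k (n + 1) : ℝ)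
        + (cycleSeq s d k n : ℝ) < 1 := by
  have hd : 1 ≤ d := by omega
  have h1Z : (1:ℤ) ≤ (s:ℤ) + k*d := by
    have h1 := T_ge_self hd
    have : (1:ℤ) ≤ (d:ℤ) := by exact_mod_cast hd
    linarith
  have hM0R : (1:ℝ) ≤ (s:ℝ) + k*d := by exact_mod_cast h1Z
  have hM0pos : (0:ℝ) < (s:ℝ) + k*d := by linarith
  have hdR : (1:ℝ) ≤ (d:ℝ) := by exact_mod_cast hd
  have hM1e : (s:ℝ) + (k+1)*d = ((s:ℝ) + k*d) + d := by ring
  have hM1pos : (0:ℝ) < (s:ℝ) + (k+1)*d := by rw [hM1e]; linarith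
  have hε2 : (l+2) * ((s:ℝ)+k*d) < 1 := by
    refine (lt_div_iff₀ hM0pos).mp ?_
    linarith
  have hε1 : 1 ≤ (l+2) * ((s:ℝ)+(k+1)*d) := by
    refine (div_le_iff₀ hM1pos).mp ?_
    linarith
  have hεpos : 0 < l + 2 := by
    have h0 : (0:ℝ) < 1/((s:ℝ)+(k+1)*d) := by positivity
    linarith
  set x : ℝ := (cycleSeq s d k n : ℝ) with hx
  set y : ℝ := (cycleSeq s d k (n+1) : ℝ) with hy
  set z : ℝ := (cycleSeq s d k (n+2) : ℝ) with hz
  rcases key_s12 s d k hsd hk n with ⟨hD, h0, h1⟩ | ⟨hD, h0, h1⟩ | ⟨hD, h0, h1⟩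
  · have hDR : z - 2*y + x = 0 := by rw [hx, hy, hz]; exact_mod_cast hD
    have h0R : (0:ℝ) ≤ y := by rw [hy]; exact_mod_cast h0
    have h1R : y ≤ (s:ℝ) + k*d := by rw [hy]; exact_mod_cast h1
    constructor
    · linarith [mul_nonneg hεpos.le h0R]
    · linarith [hε2, mul_le_mul_of_nonneg_left h1R hεpos.le]
  · have hDR : z - 2*y + x = -1 := by rw [hx, hy, hz]; exact_mod_cast hD
    have h0R : (s:ℝ) + k*d + d ≤ y := by rw [hy]; exact_mod_cast h0
    have h1R : y ≤ 2*((s:ℝ) + k*d) := by rw [hy]; exact_mod_cast h1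
    have hg0 := mul_le_mul_of_nonneg_left h0R hεpos.le
    have hg1 := mul_le_mul_of_nonneg_left h1R hεpos.le
    constructor
    · nlinarith [hε1]
    · nlinarith [hε2]
  · have hDR : z - 2*y + x = 1 := by rw [hx, hy, hz]; exact_mod_cast hD
    have h0R : -((s:ℝ) + k*d) ≤ y := by rw [hy]; exact_mod_cast h0
    have h1R : y ≤ -1 := by rw [hy]; exact_mod_cast h1
    have hg0 := mul_le_mul_of_nonneg_left h0R hεpos.le
    have hg1 := mul_le_mul_of_nonneg_left h1R hεpos.le
    constructor
    · nlinarith [hε2]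
    · nlinarith [hεpos]
end

section
/- Fix an initial pair (a₀,a₁) ∈ ℤ² and a rational p/q ∈ (-2,2) in lowest terms. Suppose the integer sequence (b_n) defined by b₀ = a₀, b₁ = a₁, and 0 ≤ b_{n+2} + (p/q) b_{n+1} + b_n < 1 (with the convention resolving the boundary as in the limit ε → 0⁺) is periodic with V = max_n |b_n|. Then for every real v with 0 < v < 1/(2qV), the sequence (d_n) defined by d₀ = a₀, d₁ = a₁, and 0 ≤ d_{n+2} + (p/q + v) d_{n+1} + d_n < 1 coincides with (b_n) for all n; in particular (d_n) is periodic with the same period. -/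
/-- The sequence for `λ = p/q + 0`: the limit as `ε → 0⁺` of the parameter `p/q + ε`. -/
noncomputable def seqP (p q : ℤ) (a0 a1 : ℤ) : ℕ → ℤ
  | 0 => a0
  | 1 => a1
  | n + 2 =>
      let y := seqP p q a0 a1 (n + 1)
      let x := seqP p q a0 a1 n
      if y < 0 ∧ q ∣ y then 1 + ⌈-(p : ℚ) / q * y - x⌉ else ⌈-(p : ℚ) / q * y - x⌉

theorem stmt17 (a0 a1 p q : ℤ) (hq : 0 < q) (hcop : Int.gcd p q = 1)
    (h1 : -2 < (p : ℝ) / q) (h2 : (p : ℝ) / q < 2)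
    (hper : ∃ N : ℕ, 1 ≤ N ∧ ∀ n, seqP p q a0 a1 (n + N) = seqP p q a0 a1 n)
    (V : ℤ) (hV : IsGreatest (Set.range fun n => |seqP p q a0 a1 n|) V) :
    ∀ v : ℝ, 0 < v → v < 1 / (2 * q * V) →
      ∀ n, seq ((p : ℝ) / q + v) a0 a1 n = seqP p q a0 a1 n := by
  intro v hv hv2 n
  have hVpos : 0 < V := by
    by_contra h
    push_neg at h
    have h2qV : (2 * (q:ℝ) * V) ≤ 0 := by
      have hV0 : (V:ℝ) ≤ 0 := by exact_mod_cast h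
      have hq' : (0:ℝ) < 2 * q := by positivity
      nlinarith
    have : 1 / (2 * (q:ℝ) * V) ≤ 0 := div_nonpos_of_nonneg_of_nonpos one_pos.le h2qV
    linarith
  have hqR : (0:ℝ) < q := by exact_mod_cast hq
  have hVR : (0:ℝ) < V := by exact_mod_cast hVpos
  have hvV : v * V < 1 / (2 * q) := by
    have h2qV : (0:ℝ) < 2 * q * V := by positivity
    rw [lt_div_iff₀ h2qV] at hv2
    rw [lt_div_iff₀ (by positivity : (0:ℝ) < 2 * q)]
    nlinarith
  induction n using Nat.strong_induction_on with
  | _ n ih =>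
    match n with
    | 0 => rfl
    | 1 => rfl
    | (n+2) =>
      have h1' := ih (n+1) (by omega)
      have h0' := ih n (by omega)
      set y := seqP p q a0 a1 (n+1) with hy
      set x := seqP p q a0 a1 n with hx
      have hyV : |(y:ℝ)| ≤ V := by
        have := hV.2 ⟨n+1, rfl⟩
        exact_mod_cast this
      have hvy : |v * (y:ℝ)| < 1 / (2 * q) := by
        rw [abs_mul, abs_of_pos hv]
        calc v * |(y:ℝ)| ≤ v * V := by nlinarith [abs_nonneg (y:ℝ)]
          _ < 1 / (2*q) := hvV
      have habs := abs_lt.mp hvy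
      set k : ℤ := -(p * y) - q * x with hk
      have hqQ : (q:ℚ) ≠ 0 := by exact_mod_cast hq.ne'
      have hrQ : -(p:ℚ)/q * y - x = (k:ℚ) / q := by
        field_simp [hk]
        rw [hk]; push_cast; ring
      have hlhs : -((p:ℝ)/q + v) * y - x = (k:ℝ)/q - v * y := by
        rw [hk]
        push_cast
        field_simp
        ring
      show ⌈-((p:ℝ)/q + v) * (seq ((p:ℝ)/q + v) a0 a1 (n+1) : ℝ) - (seq ((p:ℝ)/q + v) a0 a1 n : ℝ)⌉
          = seqP p q a0 a1 (n+2)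
      rw [h1', h0']
      rw [show seqP p q a0 a1 (n+2) = if y < 0 ∧ q ∣ y then 1 + ⌈-(p : ℚ) / q * (y:ℚ) - (x:ℚ)⌉ else ⌈-(p : ℚ) / q * (y:ℚ) - (x:ℚ)⌉ from rfl]
      rw [hrQ, hlhs]
      have hkq : (k:ℝ)/q * q = k := div_mul_cancel₀ _ hqR.ne'
      clear_value y x k
      by_cases hdvd : q ∣ y
      · obtain ⟨c, hc⟩ := hdvd
        have hkqq : k = q * (-(p*c) - x) := by rw [hk, hc]; ring
        set m0 : ℤ := -(p*c) - x with hm0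
        have hkR : (k:ℝ)/q = m0 := by
          rw [hkqq]; push_cast; field_simp
        have hkQ : (k:ℚ)/q = m0 := by
          rw [hkqq]; push_cast; field_simp
        rw [hkR, hkQ, Int.ceil_intCast]
        have hqhalf : 1/(2*(q:ℝ)) ≤ 1 := by
          rw [div_le_one (by linarith)]
          have : (1:ℝ) ≤ q := by exact_mod_cast hq
          linarith
        by_cases hyneg : y < 0
        · rw [if_pos ⟨hyneg, ⟨c, hc⟩⟩]
          have hyle : (y:ℝ) ≤ -1 := by
            have : y ≤ -1 := by omega
            exact_mod_cast this
          rw [Int.ceil_eq_iff]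
          push_cast
          constructor
          · nlinarith
          · linarith
        · have hcond : ¬ (y < 0 ∧ q ∣ y) := fun h => hyneg h.1
          rw [if_neg hcond]
          have hyge : (0:ℝ) ≤ y := by exact_mod_cast (not_lt.mp hyneg)
          rw [Int.ceil_eq_iff]
          push_cast
          constructor
          · linarith
          · nlinarith
      · have hcond : ¬ (y < 0 ∧ q ∣ y) := fun h => hdvd h.2
        rw [if_neg hcond]
        set m : ℤ := ⌈(k:ℚ)/q⌉ with hm
        have hkndvd : ¬ q ∣ k := by
          intro hdk
          apply hdvd
          have hpy : q ∣ p * y := by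
            have hpyk : p * y = -k - q * x := by rw [hk]; ring
            rw [hpyk]
            exact dvd_sub (dvd_neg.mpr hdk) (Dvd.intro x rfl)
          have hcop' : IsCoprime (q:ℤ) p :=
            Int.isCoprime_iff_gcd_eq_one.mpr (by rw [Int.gcd_comm]; exact hcop)
          exact hcop'.dvd_of_dvd_mul_right (by rwa [mul_comm] at hpy)
        have hqQ' : (0:ℚ) < q := by exact_mod_cast hq
        have hle : (k:ℚ)/q ≤ m := Int.le_ceil _
        have hlt : (m:ℚ) - 1 < (k:ℚ)/q := by
          linarith [Int.ceil_lt_add_one ((k:ℚ)/q)]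
        have hub : k ≤ m * q := by
          have h' : (k:ℚ) ≤ m * q := by
            rw [div_le_iff₀ hqQ'] at hle
            exact_mod_cast hle
          exact_mod_cast h'
        have hlb : m * q - q < k := by
          have h' : ((m:ℚ) - 1) * q < k := (lt_div_iff₀ hqQ').mp hlt
          have h'' : (m:ℚ) * q - q < k := by linarith [h']
          exact_mod_cast h''
        have hne : m * q ≠ k := fun h => hkndvd ⟨m, by rw [← h, mul_comm]⟩
        have h1q : 1 ≤ m * q - k := by omega
        have h2q : m * q - k ≤ q - 1 := by omega
        have h1qR : (1:ℝ) ≤ m * q - k := by exact_mod_cast h1q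
        have h2qR : (m:ℝ) * q - k ≤ q - 1 := by exact_mod_cast h2q
        have hqvy : (q:ℝ) * (v * y) < 1/2 := by
          have h := mul_lt_mul_of_pos_left habs.2 hqR
          calc (q:ℝ) * (v * y) < q * (1/(2*q)) := h
            _ = 1/2 := by field_simp
        have hqvy' : -(1/2 : ℝ) < q * (v * y) := by
          have h := mul_lt_mul_of_pos_left habs.1 hqR
          calc -(1/2 : ℝ) = q * (-(1/(2*q))) := by field_simp
            _ < q * (v * y) := h
        have e : ((k:ℝ)/q - v*(y:ℝ)) * q = k - q * (v * y) := by
          field_simp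
        rw [Int.ceil_eq_iff]
        constructor
        · have expand : ((m:ℝ) - 1) * q = m * q - q := by ring
          have hgoal1 : ((m:ℝ) - 1) * q < ((k:ℝ)/q - v*(y:ℝ)) * q := by
            rw [e, expand]
            linarith
          have h' := (mul_lt_mul_iff_of_pos_right hqR).mp hgoal1
          push_cast
          linarith
        · have hgoal2 : ((k:ℝ)/q - v*(y:ℝ)) * q ≤ (m:ℝ) * q := by
            rw [e]
            linarith
          exact (mul_le_mul_iff_of_pos_right hqR).mp hgoal2
end

section
/- Let (b_n) be the periodic sequence with (b_n, b_{n+1}) given by iterating G from (a₀,a₁), and let V = max_n |b_n|. Then for every real λ with 2 - 1/(2V) < λ < 2 (take any 0 < v < 1/(2V) and λ = 2 - v), the integer sequence (c_n) defined by c₀ = a₀, c₁ = a₁ and 0 ≤ c_{n+2} + λ c_{n+1} + c_n < 1 equals (b_n) for all n. -/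
theorem stmt18 (a0 a1 : ℤ) (V : ℤ)
    (hV : IsGreatest (Set.range fun n : ℕ => |(G^[n] (a0, a1)).1|) V) :
    ∀ l : ℝ, 2 - 1 / (2 * V) < l → l < 2 →
      ∀ n : ℕ, seq l a0 a1 n = (G^[n] (a0, a1)).1 := by
  intro l hl1 hl2
  set b : ℕ → ℤ := fun n => (G^[n] (a0, a1)).1 with hb
  have hbound : ∀ m : ℕ, |b m| ≤ V := fun m => hV.2 ⟨m, rfl⟩
  have hVnn : 0 ≤ V := le_trans (abs_nonneg _) (hbound 0)
  have hVpos : 0 < V := by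
    rcases lt_or_eq_of_le hVnn with h | h
    · exact h
    · exfalso
      rw [← h] at hl1
      norm_num at hl1
      linarith
  have hVR : (0:ℝ) < (V:ℝ) := by exact_mod_cast hVpos
  set v : ℝ := 2 - l with hv
  have hv0 : 0 < v := by simp [hv]; linarith
  have hvV : v * V < 1/2 := by
    have h2V : (0:ℝ) < 2 * V := by positivity
    have : v < 1 / (2 * V) := by simp only [hv]; linarith
    calc v * V < (1 / (2 * V)) * V := by exact mul_lt_mul_of_pos_right this hVR
    _ = 1/2 := by field_simp
  have hstep : ∀ n : ℕ, b (n+1) = (G^[n] (a0, a1)).2 := by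
    intro n
    show (G^[n+1] (a0, a1)).1 = _
    rw [Function.iterate_succ_apply']
    unfold G
    split <;> rfl
  have hrec : ∀ n : ℕ, (⌈-l * (b (n+1) : ℝ) - (b n : ℝ)⌉ : ℤ) = b (n+2) := by
    intro n
    have h1 : b (n+1) = (G^[n] (a0, a1)).2 := hstep n
    have h2 : b (n+2) = (G (G^[n] (a0, a1))).2 := by
      have := hstep (n+1)
      rwa [Function.iterate_succ_apply'] at this
    have hbn : b n = (G^[n] (a0, a1)).1 := rfl
    have habs : |b (n+1)| ≤ V := hbound (n+1)
    have habsR : |(b (n+1) : ℝ)| ≤ (V:ℝ) := by exact_mod_cast habs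
    rw [abs_le] at habsR
    rw [Int.ceil_eq_iff]
    by_cases hle : b (n+1) ≤ 0
    · have hleG : (G^[n] (a0, a1)).2 ≤ 0 := h1 ▸ hle
      have hb2 : b (n+2) = -b n - 2 * b (n+1) := by
        rw [h2, G, if_pos hleG, ← h1, ← hbn]
      have hleR : (b (n+1) : ℝ) ≤ 0 := by exact_mod_cast hle
      constructor
      · push_cast [hb2]
        nlinarith [mul_nonneg hv0.le (neg_nonneg.2 hleR)]
      · push_cast [hb2]
        nlinarith [mul_nonneg hv0.le (neg_nonneg.2 hleR)]
    · push_neg at hle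
      have hleG : ¬ (G^[n] (a0, a1)).2 ≤ 0 := by rw [← h1]; exact not_le.2 hle
      have hb2 : b (n+2) = -b n - 2 * b (n+1) + 1 := by
        rw [h2, G, if_neg hleG, ← h1, ← hbn]
      have hleR : (0:ℝ) < (b (n+1) : ℝ) := by exact_mod_cast hle
      have h1le : (1:ℝ) ≤ (b (n+1) : ℝ) := by exact_mod_cast hle
      constructor
      · push_cast [hb2]
        nlinarith
      · push_cast [hb2]
        nlinarith
  have main : ∀ n : ℕ, seq l a0 a1 n = b n ∧ seq l a0 a1 (n+1) = b (n+1) := by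
    intro n
    induction n with
    | zero => exact ⟨rfl, (hstep 0).symm⟩
    | succ k ih =>
      refine ⟨ih.2, ?_⟩
      show (⌈-l * (seq l a0 a1 (k+1) : ℝ) - (seq l a0 a1 k : ℝ)⌉ : ℤ) = _
      rw [ih.1, ih.2]
      exact hrec k
  exact fun n => (main n).1
end
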